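/- Let Γ be a compact Lie group acting orthogonally on ℝⁿ and let F ∈ 𝓤_{n,r}(Γ) be a Γ-invariant r-unfolding of f ∈ 𝓜ₙ(Γ). Then 𝓜ₙ(Γ) = T_{O_f} + T_{S_F} (equality of ℝ-subspaces of 𝓜ₙ(Γ)) if and only if 𝓔ₙ(Γ) = T^ext_{O_f} + span_ℝ{1, α₁(F), …, α_r(F)}. -/

import Mathlib

open Filter Topology Pointwise RealInnerProductSpace

noncomputable section

/-- ℝⁿ, as a Euclidean space. -/
abbrev Euc (n : ℕ) : Type := EuclideanSpace ℝ (Fin n)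

/-- The germs at `0` of real-valued functions on ℝⁿ. -/
abbrev Ger (n : ℕ) : Type := Filter.Germ (𝓝 (0 : Euc n)) ℝ

/-- A function between normed spaces defines a smooth germ at `0`:
it is `C^∞` on some neighbourhood of `0`. -/
def SmoothNear {A B : Type} [NormedAddCommGroup A] [NormedSpace ℝ A]
    [NormedAddCommGroup B] [NormedSpace ℝ B] (f : A → B) : Prop :=
  ∃ U ∈ 𝓝 (0 : A), ContDiffOn ℝ (⊤ : ℕ∞) f U

variable {n r d : ℕ} {G : Type} [Group G]

/-- Γ-invariance of (the germ at `0` of) `f : ℝⁿ → ℝ`. -/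
def InvNear (ρ : G →* (Euc n ≃ₗᵢ[ℝ] Euc n)) (f : Euc n → ℝ) : Prop :=
  ∀ᶠ x in 𝓝 (0 : Euc n), ∀ γ : G, f (ρ γ x) = f x

/-- Γ-equivariance of (the germ at `0` of) `φ : ℝⁿ → ℝⁿ`. -/
def EqvNear (ρ : G →* (Euc n ≃ₗᵢ[ℝ] Euc n)) (φ : Euc n → Euc n) : Prop :=
  ∀ᶠ x in 𝓝 (0 : Euc n), ∀ γ : G, φ (ρ γ x) = ρ γ (φ x)

/-- `𝓔ₙ(Γ)`, the set of Γ-invariant smooth germs at `0`. -/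
def EnG (ρ : G →* (Euc n ≃ₗᵢ[ℝ] Euc n)) : Set (Ger n) :=
  {h | ∃ f : Euc n → ℝ, SmoothNear f ∧ InvNear ρ f ∧ h = Filter.Germ.ofFun f}

/-- `𝓜ₙᵏ(Γ)`, the Γ-invariant smooth germs whose derivatives of order `< k` vanish at `0`. -/
def MnkG (ρ : G →* (Euc n ≃ₗᵢ[ℝ] Euc n)) (k : ℕ) : Set (Ger n) :=
  {h | ∃ f : Euc n → ℝ, SmoothNear f ∧ InvNear ρ f ∧
    (∀ i < k, iteratedFDeriv ℝ i f 0 = 0) ∧ h = Filter.Germ.ofFun f}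

/-- `𝓜ₙ(Γ) = 𝓜ₙ¹(Γ)`. -/
abbrev MnG (ρ : G →* (Euc n ≃ₗᵢ[ℝ] Euc n)) : Set (Ger n) := MnkG ρ 1

/-- The tangent space `T_{O_f}` to the orbit of `f`: germs `φ·∇f` with `φ` a Γ-equivariant
germ vanishing at `0`. -/
def TOrb (ρ : G →* (Euc n ≃ₗᵢ[ℝ] Euc n)) (f : Euc n → ℝ) : Set (Ger n) :=
  {h | ∃ φ : Euc n → Euc n, SmoothNear φ ∧ EqvNear ρ φ ∧ φ 0 = 0 ∧
    h = Filter.Germ.ofFun fun x => ⟪φ x, gradient f x⟫}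

/-- The extended tangent space `T^ext_{O_f}`: germs `φ·∇f` with `φ` a Γ-equivariant germ. -/
def TOrbExt (ρ : G →* (Euc n ≃ₗᵢ[ℝ] Euc n)) (f : Euc n → ℝ) : Set (Ger n) :=
  {h | ∃ φ : Euc n → Euc n, SmoothNear φ ∧ EqvNear ρ φ ∧
    h = Filter.Germ.ofFun fun x => ⟪φ x, gradient f x⟫}

/-- The Taylor polynomial `j^k f` of order `k` of `f` at `0`, evaluated at `x`. -/
def taylorPoly (f : Euc n → ℝ) (k : ℕ) (x : Euc n) : ℝ :=
  ∑ i ∈ Finset.range (k + 1), (1 / (i.factorial : ℝ)) * iteratedFDeriv ℝ i f 0 (fun _ => x)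

/-- The codimension (in `ℕ∞`) of a subspace `T` inside `M`: the least number of germs that
together with `T` ℝ-linearly span `M`. -/
def codimOf {m : ℕ} (T M : Set (Ger m)) : ℕ∞ :=
  sInf {c : ℕ∞ | ∃ k : ℕ, c = (k : ℕ∞) ∧ ∃ v : Fin k → Ger m,
    M ⊆ {g | ∃ t ∈ T, ∃ a : Fin k → ℝ, g = t + ∑ i, a i • v i}}

/-- The Γ-codimension `cod_Γ(f) = dim_ℝ 𝓜ₙ(Γ)/T^ext_{O_f}`. -/
def codG (ρ : G →* (Euc n ≃ₗᵢ[ℝ] Euc n)) (f : Euc n → ℝ) : ℕ∞ :=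
  codimOf (TOrbExt ρ f) (MnG ρ)

/-- A germ of a diffeomorphism of `(A, 0)` fixing `0`. -/
def GermDiffeo {A : Type} [NormedAddCommGroup A] [NormedSpace ℝ A] (φ : A → A) : Prop :=
  SmoothNear φ ∧ φ 0 = 0 ∧ ∃ ψ : A → A, SmoothNear ψ ∧ ψ 0 = 0 ∧
    (∀ᶠ x in 𝓝 (0 : A), ψ (φ x) = x) ∧ (∀ᶠ x in 𝓝 (0 : A), φ (ψ x) = x)

/-- `Lₙ(Γ)`: germs of Γ-equivariant diffeomorphisms of `(ℝⁿ, 0)` fixing the origin. -/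
def LnG (ρ : G →* (Euc n ≃ₗᵢ[ℝ] Euc n)) (φ : Euc n → Euc n) : Prop :=
  GermDiffeo φ ∧ EqvNear ρ φ

/-- Γ-equivalence of germs: `g = f ∘ φ` for some `φ ∈ Lₙ(Γ)`. -/
def GermEquiv (ρ : G →* (Euc n ≃ₗᵢ[ℝ] Euc n)) (f g : Euc n → ℝ) : Prop :=
  ∃ φ : Euc n → Euc n, LnG ρ φ ∧ ∀ᶠ x in 𝓝 (0 : Euc n), g x = f (φ x)

/-- Γ-invariance, in the `x`-variable, of (the germ at `0` of) a family `F : ℝⁿ × ℝʳ → ℝ`. -/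
def InvNearU (ρ : G →* (Euc n ≃ₗᵢ[ℝ] Euc n)) (F : Euc n × Euc r → ℝ) : Prop :=
  ∀ᶠ p : Euc n × Euc r in 𝓝 0, ∀ γ : G, F (ρ γ p.1, p.2) = F p

/-- `F` is a Γ-invariant `r`-unfolding of `f`. -/
def IsUnfolding (ρ : G →* (Euc n ≃ₗᵢ[ℝ] Euc n)) (f : Euc n → ℝ)
    (F : Euc n × Euc r → ℝ) : Prop :=
  SmoothNear F ∧ (∀ᶠ x in 𝓝 (0 : Euc n), F (x, 0) = f x) ∧ InvNearU ρ F

/-- `αᵢ(F) = ∂F/∂uᵢ(·, 0)`. -/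
def alphaU (F : Euc n × Euc r → ℝ) (i : Fin r) (x : Euc n) : ℝ :=
  gradient (fun u => F (x, u)) 0 i

/-- `span_ℝ {1, α₁(F), …, α_r(F)}`, as a set of germs at `0`. -/
def SpanAlpha (F : Euc n × Euc r → ℝ) : Set (Ger n) :=
  {h | ∃ (c : ℝ) (b : Fin r → ℝ),
    h = Filter.Germ.ofFun fun x => c + ∑ i, b i * alphaU F i x}

/-- `F` is a Γ-transversal unfolding of `f`:
`𝓔ₙ(Γ) = T^ext_{O_f} + span_ℝ {1, α₁(F), …, α_r(F)}`. -/
def Transversal (ρ : G →* (Euc n ≃ₗᵢ[ℝ] Euc n)) (f : Euc n → ℝ)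
    (F : Euc n × Euc r → ℝ) : Prop :=
  EnG ρ = TOrbExt ρ f + SpanAlpha F

/-- The unfolding `Gu` (with `d` parameters) is induced from `F` (with `r` parameters). -/
def InducedFrom (ρ : G →* (Euc n ≃ₗᵢ[ℝ] Euc n)) (F : Euc n × Euc r → ℝ)
    (Gu : Euc n × Euc d → ℝ) : Prop :=
  ∃ (φ : Euc n × Euc d → Euc n) (ψ : Euc d → Euc r) (h : Euc d → ℝ),
    SmoothNear φ ∧ SmoothNear ψ ∧ SmoothNear h ∧
    φ 0 = 0 ∧ ψ 0 = 0 ∧ h 0 = 0 ∧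
    (∀ᶠ p : Euc n × Euc d in 𝓝 0, ∀ γ : G, φ (ρ γ p.1, p.2) = ρ γ (φ p)) ∧
    (∀ᶠ p : Euc n × Euc d in 𝓝 0, Gu p = F (φ p, ψ p.2) + h p.2)

/-- Γ-equivalence of two `r`-unfoldings: induced with a germ diffeomorphism in the parameters. -/
def EquivUnf (ρ : G →* (Euc n ≃ₗᵢ[ℝ] Euc n)) (F Gu : Euc n × Euc r → ℝ) : Prop :=
  ∃ (φ : Euc n × Euc r → Euc n) (ψ : Euc r → Euc r) (h : Euc r → ℝ),
    SmoothNear φ ∧ GermDiffeo ψ ∧ SmoothNear h ∧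
    φ 0 = 0 ∧ h 0 = 0 ∧
    (∀ᶠ p : Euc n × Euc r in 𝓝 0, ∀ γ : G, φ (ρ γ p.1, p.2) = ρ γ (φ p)) ∧
    (∀ᶠ p : Euc n × Euc r in 𝓝 0, Gu p = F (φ p, ψ p.2) + h p.2)

/-- `F` is a versal unfolding of `f`: every Γ-invariant unfolding of `f` is induced from `F`. -/
def Versal (ρ : G →* (Euc n ≃ₗᵢ[ℝ] Euc n)) (f : Euc n → ℝ)
    (F : Euc n × Euc r → ℝ) : Prop :=
  ∀ (d : ℕ) (Gu : Euc n × Euc d → ℝ), IsUnfolding ρ f Gu → InducedFrom ρ F Gu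

/-- `T_{S_F}`: the tangent space generated by the unfolding `F`. -/
def TSF {n r : ℕ} {G : Type} [Group G] (ρ : G →* (Euc n ≃ₗᵢ[ℝ] Euc n))
    (f : Euc n → ℝ) (F : Euc n × Euc r → ℝ) : Set (Ger n) :=
  {h | ∃ v₁ : Euc n, (∀ γ : G, ρ γ v₁ = v₁) ∧ ∃ v₂ : Euc r,
    h = Filter.Germ.ofFun fun x =>
      ⟪v₁, gradient f x - gradient f 0⟫ +
      ⟪v₂, gradient (fun u => F (x, u)) 0 - gradient (fun u => F (0, u)) 0⟫}

/-!
An invariant germ `g` splits as `(g - g(0)) + g(0)`, so `𝓔ₙ(Γ) = 𝓜ₙ(Γ) ⊕ ℝ`. Writing an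
equivariant `φ` as `(φ - φ(0)) + φ(0)` with `φ(0) ∈ ℝⁿ_Γ`, and `∑ bᵢ αᵢ(F)` as `b · ∇_u F(·, 0)`,
shows `T^ext_{O_f} + span_ℝ{1, α(F)} = (T_{O_f} + T_{S_F}) ⊕ ℝ`. As `T_{O_f} + T_{S_F} ⊆ 𝓜ₙ(Γ)`,
the constants can be cancelled from both equations.
-/

theorem AddSubgroup.coe_eq_iff_add_eq_add {A : Type*} [AddGroup A] (M : AddSubgroup A)
    {T C : Set A} (hT : T ⊆ M) (hC : (0 : A) ∈ C) (hMC : (M : Set A) ∩ C ⊆ {0}) :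
    (M : Set A) = T ↔ (M : Set A) + C = T + C := by
  refine ⟨fun h => h ▸ rfl, fun h => (Set.Subset.antisymm (fun m hm => ?_) hT)⟩
  obtain ⟨t, ht, c, hc, htc⟩ : m + 0 ∈ T + C := h ▸ Set.add_mem_add hm hC
  rw [add_zero] at htc
  have hcM : c ∈ M := by simpa [← htc] using M.add_mem (M.neg_mem (hT ht)) hm
  obtain rfl : c = 0 := hMC ⟨hcM, hc⟩
  simpa [← htc] using ht

section Smooth

variable {A B : Type} [NormedAddCommGroup A] [NormedSpace ℝ A]
  [NormedAddCommGroup B] [NormedSpace ℝ B]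

theorem smoothNear_iff_eventually_contDiffAt {f : A → B} :
    SmoothNear f ↔ ∀ᶠ x in 𝓝 0, ContDiffAt ℝ (⊤ : ℕ∞) f x := by
  constructor
  · rintro ⟨U, hU, hf⟩
    filter_upwards [eventually_mem_nhds_iff.2 hU] with x hx
    exact hf.contDiffAt hx
  · intro h
    obtain ⟨U, hfU, hU, h0⟩ := eventually_nhds_iff.1 h
    exact ⟨U, hU.mem_nhds h0, fun x hx => (hfU x hx).contDiffWithinAt⟩

theorem smoothNear_const (c : B) : SmoothNear fun _ : A => c :=
  ⟨Set.univ, Filter.univ_mem, contDiffOn_const⟩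

theorem SmoothNear.add {f g : A → B} (hf : SmoothNear f) (hg : SmoothNear g) :
    SmoothNear fun x => f x + g x := by
  rw [smoothNear_iff_eventually_contDiffAt] at *
  filter_upwards [hf, hg] with x hfx hgx
  exact hfx.add hgx

theorem SmoothNear.neg {f : A → B} (hf : SmoothNear f) : SmoothNear fun x => -f x := by
  rw [smoothNear_iff_eventually_contDiffAt] at *
  filter_upwards [hf] with x hfx
  exact hfx.neg

theorem SmoothNear.sub {f g : A → B} (hf : SmoothNear f) (hg : SmoothNear g) :
    SmoothNear fun x => f x - g x := by
  simpa only [sub_eq_add_neg] using hf.add hg.neg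

end Smooth

section Gradient

variable {E : Type} [NormedAddCommGroup E] [InnerProductSpace ℝ E] [CompleteSpace E]

theorem ContDiffAt.gradient {f : E → ℝ} {x : E} (hf : ContDiffAt ℝ (⊤ : ℕ∞) f x) :
    ContDiffAt ℝ (⊤ : ℕ∞) (gradient f) x :=
  (InnerProductSpace.toDual ℝ E).symm.contDiff.contDiffAt.comp x (hf.fderiv_right le_rfl)

theorem SmoothNear.partialGradient {E R : Type} [NormedAddCommGroup E] [NormedSpace ℝ E]
    [NormedAddCommGroup R] [InnerProductSpace ℝ R] [CompleteSpace R] {F : E × R → ℝ}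
    (hF : SmoothNear F) : SmoothNear fun x => gradient (fun u => F (x, u)) 0 := by
  rw [smoothNear_iff_eventually_contDiffAt] at *
  have hF0 : ∀ᶠ x in 𝓝 (0 : E), ContDiffAt ℝ (⊤ : ℕ∞) F (x, 0) :=
    (continuous_id.prodMk continuous_const).tendsto' 0 0 rfl |>.eventually hF
  filter_upwards [hF0.eventually_nhds] with x hx
  have hsmooth : ContDiffAt ℝ (⊤ : ℕ∞)
      (fun y => (InnerProductSpace.toDual ℝ R).symm
        ((fderiv ℝ F (y, 0)).comp (ContinuousLinearMap.inr ℝ E R))) x :=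
    (InnerProductSpace.toDual ℝ R).symm.contDiff.contDiffAt.comp x
      (((hx.self_of_nhds.fderiv_right le_rfl).comp x
        (contDiffAt_id.prodMk contDiffAt_const)).clm_comp contDiffAt_const)
  refine hsmooth.congr_of_eventuallyEq ?_
  filter_upwards [hx] with y hy
  exact (((hy.differentiableAt (by simp)).hasFDerivAt.comp 0
    (hasFDerivAt_prodMk_right y 0)).hasGradientAt).gradient

theorem gradient_map_of_comp_eventuallyEq {f : E → ℝ} (e : E ≃ₗᵢ[ℝ] E) {x : E}
    (h : f ∘ e =ᶠ[𝓝 x] f) : gradient f (e x) = e (gradient f x) := by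
  refine ext_inner_left ℝ fun v => ?_
  calc ⟪v, gradient f (e x)⟫ = fderiv ℝ f (e x) v := by simp [inner_gradient_right]
    _ = fderiv ℝ (f ∘ e) x (e.symm v) := by
      rw [show f ∘ e = f ∘ e.toContinuousLinearEquiv from rfl,
        ContinuousLinearEquiv.comp_right_fderiv]
      simp
    _ = ⟪e.symm v, gradient f x⟫ := by simp [h.fderiv_eq, inner_gradient_right]
    _ = ⟪v, e (gradient f x)⟫ := by
      rw [← e.inner_map_map, e.apply_symm_apply]

end Gradient

section Equivariance

variable {ρ : G →* (Euc n ≃ₗᵢ[ℝ] Euc n)}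

theorem InvNear.gradient_map {f : Euc n → ℝ} (hf : InvNear ρ f) :
    ∀ᶠ x in 𝓝 0, ∀ γ, gradient f (ρ γ x) = ρ γ (gradient f x) := by
  filter_upwards [hf.eventually_nhds] with x hx γ
  exact gradient_map_of_comp_eventuallyEq (ρ γ) (hx.mono fun y hy => hy γ)

theorem InvNear.inner_gradient {f : Euc n → ℝ} {φ : Euc n → Euc n} (hf : InvNear ρ f)
    (hφ : EqvNear ρ φ) : InvNear ρ fun x => ⟪φ x, gradient f x⟫ := by
  filter_upwards [hf.gradient_map, hφ] with x hfx hφx γ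
  rw [hfx γ, hφx γ, LinearIsometryEquiv.inner_map_map]

theorem InvNearU.partialGradient_map {F : Euc n × Euc r → ℝ} (hF : InvNearU ρ F) :
    ∀ᶠ x in 𝓝 0, ∀ γ,
      gradient (fun u => F (ρ γ x, u)) 0 = gradient (fun u => F (x, u)) 0 := by
  have hF' : ∀ᶠ p in 𝓝 (0 : Euc n) ×ˢ 𝓝 (0 : Euc r), ∀ γ, F (ρ γ p.1, p.2) = F p := by
    rw [← nhds_prod_eq]
    exact hF
  filter_upwards [hF'.curry] with x hx γ
  exact Filter.EventuallyEq.gradient_eq (hx.mono fun u hu => hu γ)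

theorem eqvNear_const {v : Euc n} (hv : ∀ γ, ρ γ v = v) : EqvNear ρ fun _ => v :=
  Eventually.of_forall fun _ γ => (hv γ).symm

theorem EqvNear.map_apply_zero {φ : Euc n → Euc n} (hφ : EqvNear ρ φ) (γ : G) :
    ρ γ (φ 0) = φ 0 := by
  simpa using (hφ.self_of_nhds γ).symm

theorem EqvNear.add {φ ψ : Euc n → Euc n} (hφ : EqvNear ρ φ) (hψ : EqvNear ρ ψ) :
    EqvNear ρ fun x => φ x + ψ x := by
  filter_upwards [hφ, hψ] with x hφx hψx γ
  rw [hφx γ, hψx γ, map_add]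

theorem EqvNear.sub {φ ψ : Euc n → Euc n} (hφ : EqvNear ρ φ) (hψ : EqvNear ρ ψ) :
    EqvNear ρ fun x => φ x - ψ x := by
  filter_upwards [hφ, hψ] with x hφx hψx γ
  rw [hφx γ, hψx γ, map_sub]

end Equivariance

section InvariantGerms

variable {ρ : G →* (Euc n ≃ₗᵢ[ℝ] Euc n)}

variable (ρ) in
def EnGAddSubgroup : AddSubgroup (Ger n) where
  carrier := EnG ρ
  add_mem' := by
    rintro _ _ ⟨f, hf, hfi, rfl⟩ ⟨g, hg, hgi, rfl⟩
    refine ⟨_, hf.add hg, ?_, rfl⟩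
    filter_upwards [hfi, hgi] with x hfx hgx γ
    rw [hfx γ, hgx γ]
  zero_mem' := ⟨0, smoothNear_const 0, Eventually.of_forall fun _ _ => rfl, rfl⟩
  neg_mem' := by
    rintro _ ⟨f, hf, hfi, rfl⟩
    refine ⟨_, hf.neg, ?_, rfl⟩
    filter_upwards [hfi] with x hfx γ
    rw [hfx γ]

theorem const_mem_EnG (c : ℝ) : Germ.const c ∈ EnG ρ :=
  ⟨fun _ => c, smoothNear_const c, Eventually.of_forall fun _ _ => rfl, rfl⟩

theorem mem_MnG_iff {h : Ger n} : h ∈ MnG ρ ↔ h ∈ EnG ρ ∧ h.value = 0 := by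
  constructor
  · rintro ⟨f, hf, hfi, hf0, rfl⟩
    refine ⟨⟨f, hf, hfi, rfl⟩, ?_⟩
    simpa using congrArg (· fun _ => 0) (hf0 0 zero_lt_one)
  · rintro ⟨⟨f, hf, hfi, rfl⟩, hf0⟩
    refine ⟨f, hf, hfi, fun i hi => ?_, rfl⟩
    obtain rfl : i = 0 := Nat.lt_one_iff.mp hi
    ext m
    simpa [iteratedFDeriv_zero_apply] using hf0

variable (ρ) in
def MnGAddSubgroup : AddSubgroup (Ger n) :=
  EnGAddSubgroup ρ ⊓ Germ.valueAddHom.ker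

theorem mem_MnGAddSubgroup {h : Ger n} : h ∈ MnGAddSubgroup ρ ↔ h ∈ MnG ρ :=
  mem_MnG_iff.symm

theorem coe_MnGAddSubgroup : (MnGAddSubgroup ρ : Set (Ger n)) = MnG ρ :=
  Set.ext fun _ => mem_MnGAddSubgroup

theorem EnG_eq_MnG_add_range_const : EnG ρ = MnG ρ + Set.range (Germ.const : ℝ → Ger n) := by
  ext h
  constructor
  · rintro ⟨g, hg, hgi, rfl⟩
    refine ⟨Germ.ofFun g - Germ.const (g 0), mem_MnG_iff.2 ⟨?_, by exact sub_self (g 0)⟩,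
      _, ⟨g 0, rfl⟩, sub_add_cancel _ _⟩
    exact (EnGAddSubgroup ρ).sub_mem ⟨g, hg, hgi, rfl⟩ (const_mem_EnG _)
  · rintro ⟨m, hm, _, ⟨c, rfl⟩, rfl⟩
    exact (EnGAddSubgroup ρ).add_mem (mem_MnG_iff.1 hm).1 (const_mem_EnG c)

theorem MnG_inter_range_const_subset :
    MnG ρ ∩ Set.range (Germ.const : ℝ → Ger n) ⊆ {0} := by
  rintro _ ⟨hm, c, rfl⟩
  obtain rfl : c = 0 := (mem_MnG_iff.1 hm).2
  rfl

end InvariantGerms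

section TangentSpaces

variable {ρ : G →* (Euc n ≃ₗᵢ[ℝ] Euc n)} {f : Euc n → ℝ} {F : Euc n × Euc r → ℝ}

theorem TOrb_subset_MnG (hf : SmoothNear f) (hfinv : InvNear ρ f) : TOrb ρ f ⊆ MnG ρ := by
  rintro _ ⟨φ, hφ, hφe, hφ0, rfl⟩
  refine mem_MnG_iff.2 ⟨⟨_, ?_, hfinv.inner_gradient hφe, rfl⟩, by simp [hφ0]⟩
  rw [smoothNear_iff_eventually_contDiffAt] at *
  filter_upwards [hf, hφ] with x hfx hφx
  exact hφx.inner ℝ hfx.gradient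

theorem TSF_subset_MnG (hf : SmoothNear f) (hfinv : InvNear ρ f) (hF : SmoothNear F)
    (hFinv : InvNearU ρ F) : TSF ρ f F ⊆ MnG ρ := by
  rintro _ ⟨v₁, hv₁, v₂, rfl⟩
  refine mem_MnG_iff.2 ⟨⟨_, ?_, ?_, rfl⟩, by simp⟩
  · have hA := hF.partialGradient
    rw [smoothNear_iff_eventually_contDiffAt] at *
    filter_upwards [hf, hA] with x hfx hAx
    exact (contDiffAt_const.inner ℝ (hfx.gradient.sub contDiffAt_const)).add
      (contDiffAt_const.inner ℝ (hAx.sub contDiffAt_const))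
  · filter_upwards [hfinv.inner_gradient (eqvNear_const hv₁), hFinv.partialGradient_map]
      with x hfx hAx γ
    simp only [inner_sub_right, hAx γ, hfx γ]

theorem sum_mul_alphaU (b : Fin r → ℝ) (x : Euc n) :
    ∑ i, b i * alphaU F i x = ⟪WithLp.toLp 2 b, gradient (fun u => F (x, u)) 0⟫ := by
  simp only [alphaU, PiLp.inner_apply, RCLike.inner_apply, conj_trivial]
  exact Finset.sum_congr rfl fun i _ => mul_comm _ _

theorem TOrbExt_add_SpanAlpha :
    TOrbExt ρ f + SpanAlpha F = TOrb ρ f + TSF ρ f F + Set.range Germ.const := by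
  ext h
  constructor
  · rintro ⟨_, ⟨φ, hφ, hφe, rfl⟩, _, ⟨c, b, rfl⟩, rfl⟩
    set w : Euc r := WithLp.toLp 2 b
    refine ⟨_, ⟨_, ⟨fun x => φ x - φ 0, hφ.sub (smoothNear_const _),
        hφe.sub (eqvNear_const hφe.map_apply_zero), sub_self _, rfl⟩,
      _, ⟨φ 0, hφe.map_apply_zero, w, rfl⟩, rfl⟩,
      _, ⟨c + ⟪φ 0, gradient f 0⟫ + ⟪w, gradient (fun u => F (0, u)) 0⟫, rfl⟩, ?_⟩
    refine congrArg Germ.ofFun (funext fun x => ?_)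
    simp only [sum_mul_alphaU, inner_sub_left, inner_sub_right]
    ring
  · rintro ⟨_, ⟨_, ⟨φ, hφ, hφe, -, rfl⟩, _, ⟨v₁, hv₁, v₂, rfl⟩, rfl⟩, _, ⟨c, rfl⟩, rfl⟩
    refine ⟨_, ⟨fun x => φ x + v₁, hφ.add (smoothNear_const _),
        hφe.add (eqvNear_const hv₁), rfl⟩,
      _, ⟨c - ⟪v₁, gradient f 0⟫ - ⟪v₂, gradient (fun u => F (0, u)) 0⟫, WithLp.ofLp v₂, rfl⟩,
      ?_⟩
    refine congrArg Germ.ofFun (funext fun x => ?_)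
    simp only [sum_mul_alphaU, WithLp.toLp_ofLp, inner_add_left, inner_sub_right]
    ring

end TangentSpaces

theorem statement5_general {n r : ℕ} {G : Type} [Group G]
    (ρ : G →* (Euc n ≃ₗᵢ[ℝ] Euc n))
    (f : Euc n → ℝ) (hf : SmoothNear f) (hfinv : InvNear ρ f)
    (F : Euc n × Euc r → ℝ) (hF : IsUnfolding ρ f F) :
    MnG ρ = TOrb ρ f + TSF ρ f F ↔ EnG ρ = TOrbExt ρ f + SpanAlpha F := by
  obtain ⟨hFsmooth, -, hFinv⟩ := hF
  have hT : TOrb ρ f + TSF ρ f F ⊆ MnGAddSubgroup ρ :=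
    Set.add_subset_iff.2 fun _ ha _ hb =>
      add_mem (mem_MnGAddSubgroup.2 (TOrb_subset_MnG hf hfinv ha))
        (mem_MnGAddSubgroup.2 (TSF_subset_MnG hf hfinv hFsmooth hFinv hb))
  rw [EnG_eq_MnG_add_range_const, TOrbExt_add_SpanAlpha, ← coe_MnGAddSubgroup]
  exact (MnGAddSubgroup ρ).coe_eq_iff_add_eq_add hT ⟨0, rfl⟩
    (coe_MnGAddSubgroup (ρ := ρ) ▸ MnG_inter_range_const_subset)

/-- `𝓜ₙ(Γ) = T_{O_f} + T_{S_F}` iff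
`𝓔ₙ(Γ) = T^ext_{O_f} + span_ℝ{1, α₁(F), …, α_r(F)}`. -/
theorem statement5 {n r : ℕ} {G : Type} [Group G] [TopologicalSpace G]
    [IsTopologicalGroup G] [CompactSpace G]
    (ρ : G →* (Euc n ≃ₗᵢ[ℝ] Euc n))
    (f : Euc n → ℝ) (hf : SmoothNear f) (hfinv : InvNear ρ f) (hf0 : f 0 = 0)
    (F : Euc n × Euc r → ℝ) (hF : IsUnfolding ρ f F) :
    MnG ρ = TOrb ρ f + TSF ρ f F ↔ EnG ρ = TOrbExt ρ f + SpanAlpha F :=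
  statement5_general ρ f hf hfinv F hF
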